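/- arXiv:0806.1749 — 3 statements merged into one kernel-verified Lean document; each statement's English description precedes it below -/
import Mathlib

section
/- If every normal form of a well-typed term of an inductive type in a closed environment is headed by a constructor (canonicity), and the environment can be consistently extended by an empty inductive type False with no constructors, then there is no term e with E ⊢ e : ∀ x : Prop, x. In other words, canonicity implies logical consistency. -/
/-- Canonicity implies logical consistency: if in the closed environment E
(consistently extended by the empty inductive type False) every well-typed
normal form of an inductive type is constructor-headed, then there is no term
e with E ⊢ e : ∀ x : Prop, x. -/
theorem canonicity_implies_consistency
    (Term Ty : Type)
    (Typed : Term → Ty → Prop)          -- typing in the closed environment E (extended with False)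
    (Normal : Term → Prop)               -- being in normal form
    (nf : Term → Term)                   -- normalization (strong normalization)
    (IndTy : Ty → Prop)                  -- being an inductive type
    (ConstrHeaded : Term → Ty → Prop)    -- headed by a constructor of the given inductive type
    (FalseTy : Ty)                       -- the empty inductive type False
    (PiPropTy : Ty)                      -- the type ∀ x : Prop, x
    (instFalse : Term → Term)            -- the application e ↦ e False
    (hnf : ∀ e t, Typed e t → Typed (nf e) t ∧ Normal (nf e))  -- normalization + subject reduction
    (hinst : ∀ e, Typed e PiPropTy → Typed (instFalse e) FalseTy)
    (hFalseInd : IndTy FalseTy)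
    (hcanon : ∀ e t, Typed e t → Normal e → IndTy t → ConstrHeaded e t)  -- canonicity
    (hempty : ∀ e, ¬ ConstrHeaded e FalseTy)  -- False has no constructors
    : ¬ ∃ e, Typed e PiPropTy := by
  rintro ⟨e, he⟩
  obtain ⟨ht, hn⟩ := hnf (instFalse e) FalseTy (hinst e he)
  exact hempty _ (hcanon _ _ ht hn hFalseInd)
end

section
/- Correctness of the coverage checking algorithm: if Rew(Γ,R) preserves reducibility and the algorithm terminates with an empty counterexample set CE = ∅, then the initial goal f(x₁,…,xₙ) is covered by R, i.e. every normalized canonical instance of it is head-reducible by R. The proof is by induction on the number of remaining loop iterations, using that immediately covered goals are covered (by preservation of reducibility) and that splitting does not lose normalized canonical instances. -/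
/-- Correctness of the coverage checking algorithm: if Rew(Γ,R) preserves
reducibility (so immediately covered goals are covered) and splitting does not
lose normalized canonical instances (so a goal all of whose split subgoals are
covered is covered), and the algorithm run starting from the initial goal
terminates with an empty worklist and an empty counterexample set, then the
initial goal is covered. -/
theorem coverage_algorithm_correct
    (Goal : Type) [DecidableEq Goal]
    (Covered ImmCovered : Goal → Prop)
    (Splits : Goal → Finset Goal → Prop)   -- successful splitting of a goal into subgoals
    (g₀ : Goal)                            -- the initial goal f(x₁,…,xₙ)
    (hImm : ∀ g, ImmCovered g → Covered g) -- preservation of reducibility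
    (hSplit : ∀ g gs, Splits g gs → (∀ g' ∈ gs, Covered g') → Covered g)
    (run : ∃ (N : ℕ) (W : ℕ → Finset Goal), W 0 = {g₀} ∧ W N = ∅ ∧
        ∀ n < N, ∃ g ∈ W n,
          (ImmCovered g ∧ W (n + 1) = (W n).erase g) ∨
          (∃ gs, Splits g gs ∧ W (n + 1) = (W n).erase g ∪ gs))
    : Covered g₀ := by
  obtain ⟨N, W, h0, hN, hstep⟩ := run
  have key : ∀ k n, n + k = N → ∀ g ∈ W n, Covered g := by
    intro k
    induction k with
    | zero =>
      intro n hn g hg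
      simp only [Nat.add_zero] at hn
      rw [hn, hN] at hg
      exact absurd hg (Finset.notMem_empty g)
    | succ k ih =>
      intro n hn g hg
      have hlt : n < N := by omega
      obtain ⟨g', hg', hcase⟩ := hstep n hlt
      have ihn : ∀ h ∈ W (n + 1), Covered h := ih (n + 1) (by omega)
      rcases hcase with ⟨himm, hW⟩ | ⟨gs, hsp, hW⟩
      · by_cases hgg : g = g'
        · exact hgg ▸ hImm g' himm
        · exact ihn g (by rw [hW]; exact Finset.mem_erase.2 ⟨hgg, hg⟩)
      · by_cases hgg : g = g'
        · refine hgg ▸ hSplit g' gs hsp (fun h hh => ihn h ?_)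
          rw [hW]; exact Finset.mem_union_right _ hh
        · exact ihn g (by rw [hW]; exact Finset.mem_union_left _ (Finset.mem_erase.2 ⟨hgg, hg⟩))
  exact key N 0 (by omega) g₀ (by rw [h0]; exact Finset.mem_singleton_self g₀)
end

section
/- The system consisting of the rule f (or b b) (C b) → if b (f true (C true)) (f false (C false)) over the inductive family I : bool → Set with constructor C : ∀ b : bool, I (or b b) (together with the standard four rules for 'or' and two rules for 'if' on booleans) is NOT a complete definition of f : ∀ b : bool, I b → bool, even though the goal f b i split along i yields only the head-reducible goal f (or b b) (C b): concretely, the normalized canonical instance f true (C true) is in normal form and not head-reducible by any rule (matching is modulo α, and (or true true) does not syntactically match the normal form true). -/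
/-- Terms built from true, false, or, if, the constructor C of the inductive
family I : bool → Set, and the defined symbol f : ∀ b, I b → bool. -/
inductive FTm
  | tt
  | ff
  | or (a b : FTm)
  | ite (a b c : FTm)
  | C (b : FTm)
  | f (a b : FTm)

open FTm

/-- One-step rewriting: the four rules for or, the two rules for if, the single
rule for f (matching syntactically, modulo α only), closed under congruence. -/
inductive Red : FTm → FTm → Prop
  | or_tt_tt : Red (or tt tt) tt
  | or_tt_ff : Red (or tt ff) tt
  | or_ff_tt : Red (or ff tt) tt
  | or_ff_ff : Red (or ff ff) ff
  | ite_tt (a b) : Red (ite tt a b) a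
  | ite_ff (a b) : Red (ite ff a b) b
  | f_rule (b) : Red (f (or b b) (C b)) (ite b (f tt (C tt)) (f ff (C ff)))
  | orl {t u} (b) : Red t u → Red (or t b) (or u b)
  | orr {t u} (a) : Red t u → Red (or a t) (or a u)
  | ite1 {t u} (b c) : Red t u → Red (ite t b c) (ite u b c)
  | ite2 {t u} (a c) : Red t u → Red (ite a t c) (ite a u c)
  | ite3 {t u} (a b) : Red t u → Red (ite a b t) (ite a b u)
  | carg {t u} : Red t u → Red (C t) (C u)
  | fl {t u} (b) : Red t u → Red (f t b) (f u b)
  | fr {t u} (a) : Red t u → Red (f a t) (f a u)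

lemma tt_nf : ∀ u, ¬ Red tt u := by rintro u ⟨⟩

lemma Ctt_nf : ∀ u, ¬ Red (C tt) u := by
  rintro u h; cases h with
  | carg h => exact tt_nf _ h

/-- f is NOT completely defined although the goal `f (or b b) (C b)` is
head-reducible: the normalized canonical instance `f true (C true)` (the normal
form of `f (or true true) (C true)`) is in normal form, hence not reducible by
any rule. -/
theorem f_not_complete :
    Relation.ReflTransGen Red (f (or tt tt) (C tt)) (f tt (C tt)) ∧
    (∀ u, ¬ Red (f tt (C tt)) u) := by
  constructor
  · exact Relation.ReflTransGen.single (Red.fl _ Red.or_tt_tt)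
  · rintro u h
    cases h with
    | fl _ h => exact tt_nf _ h
    | fr _ h => exact Ctt_nf _ h
end
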